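/- There exists a valid online placement strategy σ such that for every finite sequence x₁, …, xₙ of positive side lengths and every m with 1 ≤ m ≤ n, the minimum side length Eₘ of an axis-parallel square containing the first m placed squares satisfies Eₘ ≤ 2√2 · Opt(x₁,…,xₘ), where Opt(x₁,…,xₘ) denotes the infimum of all s > 0 such that axis-parallel squares of side lengths x₁,…,xₘ can be placed with pairwise disjoint interiors inside the square [0,s]². (Dynamic Brick Packing is 2√2-competitive for packing an online sequence of squares into a square container of small edge length.) -/

import Mathlib

/-
Bricks of class `k` are `√2 ^ k × √2 ^ (k + 1)` rectangles, alternately lying flat and standing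
upright, so that halving the long side of a class-`k` brick gives two bricks of class `k - 1`. A
square of side `x` gets the class `k = ⌈log_√2 x⌉` and is put at the corner of its own class-`k`
brick, whose area is at most `2√2 x²`. The container is the class-`c` brick at the origin, tiled by
the bricks of the squares and by free bricks of pairwise distinct classes below `c`. A new square
goes into the free brick of least sufficient class, split down to the square's class; if there is
none, the container grows to class `max c k + 1`. Since free bricks of distinct classes below `k`
weigh less than one brick of class `k`, the container always has at most twice the area of the
occupied bricks: `2 ^ c ≤ 2 ∑ 2 ^ kᵢ ≤ 4 ∑ xᵢ²`. The enclosing square of side `√2 ^ (c + 1)` thus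
has area at most `8 ∑ xᵢ² ≤ 8 Opt²`, the last step by comparing areas in an optimal packing.
-/

open Set

/-- The axis-parallel square with lower-left corner `p` and side length `x`. -/
def placedSquare (p : ℝ × ℝ) (x : ℝ) : Set (ℝ × ℝ) :=
  Icc p.1 (p.1 + x) ×ˢ Icc p.2 (p.2 + x)

/-- Given an online strategy `σ : List ℝ → ℝ × ℝ` and a sequence of side lengths
`x : Fin n → ℝ`, the `i`-th placed square: its lower-left corner is determined by
the prefix `x₁, …, xᵢ`. -/
def place (σ : List ℝ → ℝ × ℝ) {n : ℕ} (x : Fin n → ℝ) (i : Fin n) : Set (ℝ × ℝ) :=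
  placedSquare (σ ((List.ofFn x).take (i + 1))) (x i)

/-- An online placement strategy is valid if, for every finite sequence of positive
side lengths, the placed squares have pairwise disjoint interiors. -/
def ValidStrategy (σ : List ℝ → ℝ × ℝ) : Prop :=
  ∀ (n : ℕ) (x : Fin n → ℝ), (∀ i, 0 < x i) →
    ∀ i j, i ≠ j → Disjoint (interior (place σ x i)) (interior (place σ x j))

/-- The minimum side length of an axis-parallel square containing the set `S`. -/
noncomputable def minSide (S : Set (ℝ × ℝ)) : ℝ :=
  sInf {s : ℝ | ∃ a b : ℝ, S ⊆ Icc a (a + s) ×ˢ Icc b (b + s)}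

/-- The optimal (offline) container size for squares of side lengths `x₁, …, xₘ`:
the infimum of all `s > 0` such that the squares can be placed inside `[0,s]²`
with pairwise disjoint interiors. -/
noncomputable def Opt {m : ℕ} (x : Fin m → ℝ) : ℝ :=
  sInf {s : ℝ | 0 < s ∧ ∃ p : Fin m → ℝ × ℝ,
    (∀ i, placedSquare (p i) (x i) ⊆ Icc (0 : ℝ) s ×ˢ Icc (0 : ℝ) s) ∧
    ∀ i j, i ≠ j →
      Disjoint (interior (placedSquare (p i) (x i)))
        (interior (placedSquare (p j) (x j)))}

noncomputable section

namespace DynamicBrickPacking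

def scale (k : ℤ) : ℝ := √2 ^ k

lemma scale_pos (k : ℤ) : 0 < scale k := zpow_pos (by positivity) k

lemma scale_mono {j k : ℤ} (h : j ≤ k) : scale j ≤ scale k :=
  zpow_le_zpow_right₀ Real.one_lt_sqrt_two.le h

lemma scale_sq (k : ℤ) : scale k ^ 2 = 2 ^ k := by
  rw [scale, ← zpow_natCast, ← zpow_mul, mul_comm, zpow_mul, zpow_natCast,
    Real.sq_sqrt zero_le_two]

lemma scale_add_one (k : ℤ) : scale (k + 1) = 2 * scale (k - 1) := by
  have h : k + 1 = 2 + (k - 1) := by ring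
  rw [scale, scale, h, zpow_add₀ (by positivity), zpow_two, Real.mul_self_sqrt zero_le_two]

def sizeClass (x : ℝ) : ℤ := ⌈Real.logb √2 x⌉

lemma le_scale_sizeClass {x : ℝ} (hx : 0 < x) : x ≤ scale (sizeClass x) := by
  calc x = √2 ^ Real.logb √2 x :=
        (Real.rpow_logb (by positivity) Real.one_lt_sqrt_two.ne' hx).symm
    _ ≤ √2 ^ (sizeClass x : ℝ) :=
      Real.rpow_le_rpow_of_exponent_le Real.one_lt_sqrt_two.le (Int.le_ceil _)
    _ = scale (sizeClass x) := Real.rpow_intCast _ _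

lemma two_zpow_sizeClass_le {x : ℝ} (hx : 0 < x) : (2 : ℝ) ^ sizeClass x ≤ 2 * x ^ 2 := by
  have hlt : (sizeClass x : ℝ) < Real.logb √2 x + 1 := Int.ceil_lt_add_one _
  have h : scale (sizeClass x) ≤ √2 * x :=
    calc scale (sizeClass x) = √2 ^ (sizeClass x : ℝ) := (Real.rpow_intCast _ _).symm
      _ ≤ √2 ^ (Real.logb √2 x + 1) :=
        Real.rpow_le_rpow_of_exponent_le Real.one_lt_sqrt_two.le hlt.le
      _ = √2 * x := by
        rw [Real.rpow_add (by positivity), Real.rpow_logb (by positivity)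
          Real.one_lt_sqrt_two.ne' hx, Real.rpow_one, mul_comm]
  calc (2 : ℝ) ^ sizeClass x = scale (sizeClass x) ^ 2 := (scale_sq _).symm
    _ ≤ (√2 * x) ^ 2 := pow_le_pow_left₀ (scale_pos _).le h 2
    _ = 2 * x ^ 2 := by rw [mul_pow, Real.sq_sqrt zero_le_two]

def box (p : ℝ × ℝ) (w h : ℝ) : Set (ℝ × ℝ) := Icc p.1 (p.1 + w) ×ˢ Icc p.2 (p.2 + h)

lemma box_subset_box {p q : ℝ × ℝ} {w h w' h' : ℝ} (h₁ : q.1 ≤ p.1) (h₂ : p.1 + w ≤ q.1 + w')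
    (h₃ : q.2 ≤ p.2) (h₄ : p.2 + h ≤ q.2 + h') : box p w h ⊆ box q w' h' :=
  prod_mono (Icc_subset_Icc h₁ h₂) (Icc_subset_Icc h₃ h₄)

lemma interior_box (p : ℝ × ℝ) (w h : ℝ) :
    interior (box p w h) = Ioo p.1 (p.1 + w) ×ˢ Ioo p.2 (p.2 + h) := by
  rw [box, interior_prod_eq, interior_Icc, interior_Icc]

lemma disjoint_interior_box_of_left {p q : ℝ × ℝ} {w h w' h' : ℝ} (hpq : p.1 + w ≤ q.1) :
    Disjoint (interior (box p w h)) (interior (box q w' h')) := by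
  rw [interior_box, interior_box]
  exact disjoint_prod.2 (Or.inl (Ioo_disjoint_Ioo.2
    ((min_le_left _ _).trans (hpq.trans (le_max_right _ _)))))

lemma disjoint_interior_box_of_below {p q : ℝ × ℝ} {w h w' h' : ℝ} (hpq : p.2 + h ≤ q.2) :
    Disjoint (interior (box p w h)) (interior (box q w' h')) := by
  rw [interior_box, interior_box]
  exact disjoint_prod.2 (Or.inr (Ioo_disjoint_Ioo.2
    ((min_le_left _ _).trans (hpq.trans (le_max_right _ _)))))

structure Brick where
  cls : ℤ
  corner : ℝ × ℝ

namespace Brick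

def toSet (b : Brick) : Set (ℝ × ℝ) :=
  if Even b.cls then box b.corner (scale (b.cls + 1)) (scale b.cls)
  else box b.corner (scale b.cls) (scale (b.cls + 1))

/-- The half of `b` away from its corner; the other half is `⟨b.cls - 1, b.corner⟩`. -/
def secondHalf (b : Brick) : Brick :=
  ⟨b.cls - 1, b.corner + if Even b.cls then (scale (b.cls - 1), 0) else (0, scale (b.cls - 1))⟩

@[simp] lemma secondHalf_cls (b : Brick) : b.secondHalf.cls = b.cls - 1 := rfl

def InteriorDisjoint (b b' : Brick) : Prop := Disjoint (interior b.toSet) (interior b'.toSet)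

lemma InteriorDisjoint.symm {b b' : Brick} (h : InteriorDisjoint b b') : InteriorDisjoint b' b :=
  Disjoint.symm h

lemma InteriorDisjoint.mono {a a' b b' : Brick} (h : InteriorDisjoint a b)
    (ha : a'.toSet ⊆ a.toSet) (hb : b'.toSet ⊆ b.toSet) : InteriorDisjoint a' b' :=
  Disjoint.mono (interior_mono ha) (interior_mono hb) h

lemma pred_subset (k : ℤ) (p : ℝ × ℝ) : (⟨k - 1, p⟩ : Brick).toSet ⊆ (⟨k, p⟩ : Brick).toSet := by
  have := scale_add_one k
  have := scale_mono (show k - 1 ≤ k by omega)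
  have := scale_pos (k - 1)
  by_cases hk : Even k
  · have hk' : ¬Even (k - 1) := by simpa [Int.even_sub_one] using hk
    simp only [toSet, hk, hk', if_true, if_false, sub_add_cancel]
    exact box_subset_box le_rfl (by linarith) le_rfl le_rfl
  · have hk' : Even (k - 1) := Int.even_sub_one.2 hk
    simp only [toSet, hk, hk', if_true, if_false, sub_add_cancel]
    exact box_subset_box le_rfl le_rfl le_rfl (by linarith)

lemma secondHalf_subset (b : Brick) : b.secondHalf.toSet ⊆ b.toSet := by
  have := scale_add_one b.cls
  by_cases hk : Even b.cls
  · have hk' : ¬Even (b.cls - 1) := by simpa [Int.even_sub_one] using hk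
    simp only [toSet, secondHalf, hk, hk', if_true, if_false, sub_add_cancel]
    exact box_subset_box (by simp [(scale_pos _).le]) (by simp; linarith) (by simp) (by simp)
  · have hk' : Even (b.cls - 1) := Int.even_sub_one.2 hk
    simp only [toSet, secondHalf, hk, hk', if_true, if_false, sub_add_cancel]
    exact box_subset_box (by simp) (by simp) (by simp [(scale_pos _).le]) (by simp; linarith)

lemma interiorDisjoint_secondHalf (b : Brick) :
    InteriorDisjoint ⟨b.cls - 1, b.corner⟩ b.secondHalf := by
  by_cases hk : Even b.cls
  · have hk' : ¬Even (b.cls - 1) := by simpa [Int.even_sub_one] using hk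
    simp only [InteriorDisjoint, toSet, secondHalf, hk, hk', if_true, if_false]
    exact disjoint_interior_box_of_left (by simp)
  · have hk' : Even (b.cls - 1) := Int.even_sub_one.2 hk
    simp only [InteriorDisjoint, toSet, secondHalf, hk, hk', if_true, if_false]
    exact disjoint_interior_box_of_below (by simp)

lemma toSet_mono_cls (p : ℝ × ℝ) {j k : ℤ} (h : j ≤ k) :
    (⟨j, p⟩ : Brick).toSet ⊆ (⟨k, p⟩ : Brick).toSet := by
  induction k, h using Int.leInduction with
  | base => exact le_rfl
  | succ k _ ih => exact ih.trans (by simpa using pred_subset (k + 1) p)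

lemma placedSquare_subset (b : Brick) {x : ℝ} (hx : x ≤ scale b.cls) :
    placedSquare b.corner x ⊆ b.toSet := by
  have := scale_mono (show b.cls ≤ b.cls + 1 by omega)
  unfold toSet
  split_ifs <;> exact box_subset_box le_rfl (by linarith) le_rfl (by linarith)

end Brick

def container (c : ℤ) : Brick := ⟨c, 0⟩

lemma container_subset (c : ℤ) :
    (container c).toSet ⊆ placedSquare 0 (scale (c + 1)) := by
  have := scale_mono (show c ≤ c + 1 by omega)
  unfold Brick.toSet container
  split_ifs <;> exact box_subset_box le_rfl (by simp [this]) le_rfl (by simp [this])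

open Brick

/-- `2 ^ k` is proportional to the area of a class-`k` brick. -/
def weight (l : List Brick) : ℝ := (l.map fun b => (2 : ℝ) ^ b.cls).sum

@[simp] lemma weight_nil : weight [] = 0 := rfl

@[simp] lemma weight_cons (b : Brick) (l : List Brick) :
    weight (b :: l) = 2 ^ b.cls + weight l := List.sum_cons

@[simp] lemma weight_append (l l' : List Brick) : weight (l ++ l') = weight l + weight l' := by
  simp [weight]

lemma weight_eq_of_perm {l l' : List Brick} (h : l.Perm l') : weight l = weight l' :=
  (h.map _).sum_eq

lemma sum_two_zpow_lt (s : Finset ℤ) {k : ℤ} (hs : ∀ j ∈ s, j < k) :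
    ∑ j ∈ s, (2 : ℝ) ^ j < 2 ^ k := by
  classical
  induction s using Finset.induction_on_max generalizing k with
  | empty => simpa using zpow_pos two_pos k
  | insert a s hlt ih =>
    have hak : a < k := hs a (Finset.mem_insert_self a s)
    calc ∑ j ∈ insert a s, (2 : ℝ) ^ j = 2 ^ a + ∑ j ∈ s, (2 : ℝ) ^ j :=
          Finset.sum_insert fun has => (hlt a has).false
      _ < 2 ^ a + 2 ^ a := by gcongr; exact ih hlt
      _ = 2 ^ (a + 1) := by rw [zpow_add_one₀ two_ne_zero]; ring
      _ ≤ 2 ^ k := zpow_le_zpow_right₀ one_le_two hak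

lemma weight_lt_of_nodup {l : List Brick} {k : ℤ} (hl : (l.map Brick.cls).Nodup)
    (hk : ∀ b ∈ l, b.cls < k) : weight l < 2 ^ k := by
  classical
  have h := sum_two_zpow_lt (l.map Brick.cls).toFinset (k := k) (by simpa using hk)
  rwa [List.sum_toFinset _ hl, List.map_map] at h

/-- Together with `⟨a, p⟩`, these bricks tile `⟨a + n, p⟩`. -/
def halves (p : ℝ × ℝ) (a : ℤ) : ℕ → List Brick
  | 0 => []
  | n + 1 => (⟨a + n + 1, p⟩ : Brick).secondHalf :: halves p a n

section Halves

variable {p : ℝ × ℝ} {a : ℤ} {n : ℕ} {b : Brick}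

lemma cls_of_mem_halves (hb : b ∈ halves p a n) : a ≤ b.cls ∧ b.cls < a + n := by
  induction n with
  | zero => simp [halves] at hb
  | succ n ih =>
    rcases List.mem_cons.1 hb with rfl | hb
    · simp
    · have := ih hb; omega

lemma subset_of_mem_halves (hb : b ∈ halves p a n) : b.toSet ⊆ (⟨a + n, p⟩ : Brick).toSet := by
  induction n with
  | zero => simp [halves] at hb
  | succ n ih =>
    rcases List.mem_cons.1 hb with rfl | hb
    · simpa [add_assoc] using secondHalf_subset ⟨a + n + 1, p⟩
    · exact (ih hb).trans (toSet_mono_cls p (by omega))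

lemma interiorDisjoint_of_mem_halves (hb : b ∈ halves p a n) :
    InteriorDisjoint ⟨a, p⟩ b := by
  induction n with
  | zero => simp [halves] at hb
  | succ n ih =>
    rcases List.mem_cons.1 hb with rfl | hb
    · refine (interiorDisjoint_secondHalf ⟨a + n + 1, p⟩).mono ?_ le_rfl
      simpa using toSet_mono_cls p (show a ≤ a + n by omega)
    · exact ih hb

lemma pairwise_interiorDisjoint_halves : (halves p a n).Pairwise InteriorDisjoint := by
  induction n with
  | zero => exact List.Pairwise.nil
  | succ n ih =>
    refine List.Pairwise.cons (fun b hb => ?_) ih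
    exact (interiorDisjoint_secondHalf ⟨a + n + 1, p⟩).symm.mono le_rfl
      (by simpa using subset_of_mem_halves hb)

lemma nodup_map_cls_halves : ((halves p a n).map Brick.cls).Nodup := by
  induction n with
  | zero => exact List.nodup_nil
  | succ n ih =>
    refine List.nodup_cons.2 ⟨fun h => ?_, ih⟩
    obtain ⟨b, hb, hbc⟩ := List.mem_map.1 h
    have := (cls_of_mem_halves hb).2
    simp at hbc
    omega

lemma weight_halves : 2 ^ a + weight (halves p a n) = 2 ^ (a + n) := by
  induction n with
  | zero => simp [halves]
  | succ n ih =>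
    simp only [halves, weight_cons, secondHalf_cls, add_sub_cancel_right]
    rw [Nat.cast_succ, ← add_assoc a, zpow_add_one₀ two_ne_zero, ← ih]
    ring

end Halves

lemma weight_nonneg (l : List Brick) : 0 ≤ weight l :=
  List.sum_nonneg fun _ hx => by
    obtain ⟨b, -, rfl⟩ := List.mem_map.1 hx
    positivity

lemma pairwise_append_of_subset {b : Brick} {R N : List Brick}
    (hR : (b :: R).Pairwise InteriorDisjoint) (hN : N.Pairwise InteriorDisjoint)
    (hsub : ∀ u ∈ N, u.toSet ⊆ b.toSet) : (R ++ N).Pairwise InteriorDisjoint :=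
  List.pairwise_append.2 ⟨hR.of_cons, hN, fun _ hu v hv =>
    (List.rel_of_pairwise_cons hR hu).symm.mono le_rfl (hsub v hv)⟩

noncomputable instance : DecidableEq Brick := Classical.decEq _

/-- A packing in progress: the container is `container level`, each square so far owns one brick
of `homes` (in order of arrival), and `free` lists the unused bricks. -/
structure State where
  level : ℤ
  free : List Brick
  homes : List Brick

namespace State

variable {s : State} {b : Brick} {c k : ℤ}

def bricks (s : State) : List Brick := s.free ++ s.homes

structure Layout (s : State) : Prop where
  pairwise : s.bricks.Pairwise InteriorDisjoint
  subset_container : ∀ b ∈ s.bricks, b.toSet ⊆ (container s.level).toSet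
  free_cls_lt : ∀ b ∈ s.free, b.cls < s.level
  nodup_free_cls : (s.free.map Brick.cls).Nodup
  weight_eq : (2 : ℝ) ^ s.level = weight s.free + weight s.homes

def grow (s : State) (c : ℤ) : State :=
  ⟨c, s.free ++ halves 0 s.level (c - s.level).toNat, s.homes⟩

lemma Layout.grow (hs : s.Layout) (hc : s.level ≤ c) : (s.grow c).Layout := by
  set H := halves 0 s.level (c - s.level).toNat
  have hcH : s.level + ((c - s.level).toNat : ℤ) = c := by omega
  have hold : ∀ u ∈ s.bricks, u.toSet ⊆ (container c).toSet := fun u hu =>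
    (hs.subset_container u hu).trans (toSet_mono_cls 0 hc)
  refine ⟨?_, ?_, ?_, ?_, ?_⟩
  · have hperm : (s.grow c).bricks.Perm (H ++ s.bricks) := by
      rw [bricks, State.grow, List.append_assoc]
      exact List.perm_append_comm_assoc s.free H s.homes
    refine (hperm.pairwise_iff fun h => h.symm).2 (List.pairwise_append.2
      ⟨pairwise_interiorDisjoint_halves, hs.pairwise, fun h hh u hu => ?_⟩)
    exact (interiorDisjoint_of_mem_halves hh).symm.mono le_rfl (hs.subset_container u hu)
  · intro u hu
    simp only [State.grow, bricks, List.mem_append] at hu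
    rcases hu with (hu | hu) | hu
    · exact hold u (List.mem_append_left _ hu)
    · have := subset_of_mem_halves hu
      rwa [hcH] at this
    · exact hold u (List.mem_append_right _ hu)
  · intro u hu
    rcases List.mem_append.1 hu with hu | hu
    · exact (hs.free_cls_lt u hu).trans_le hc
    · have := (cls_of_mem_halves hu).2
      rwa [hcH] at this
  · refine List.map_append ▸ List.nodup_append.2
      ⟨hs.nodup_free_cls, nodup_map_cls_halves, fun i hi j hj => ?_⟩
    obtain ⟨u, hu, rfl⟩ := List.mem_map.1 hi
    obtain ⟨v, hv, rfl⟩ := List.mem_map.1 hj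
    exact ((hs.free_cls_lt u hu).trans_le (cls_of_mem_halves hv).1).ne
  · have := weight_halves (p := 0) (a := s.level) (n := (c - s.level).toNat)
    rw [hcH] at this
    simp only [State.grow, weight_append]
    linarith [hs.weight_eq]

def fill (s : State) (b : Brick) (k : ℤ) : State :=
  ⟨s.level, s.free.erase b ++ halves b.corner k (b.cls - k).toNat, s.homes ++ [⟨k, b.corner⟩]⟩

lemma Layout.fill (hs : s.Layout) (hb : b ∈ s.free) (hk : k ≤ b.cls)
    (hmin : ∀ u ∈ s.free, k ≤ u.cls → b.cls ≤ u.cls) : (s.fill b k).Layout := by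
  obtain ⟨j, p⟩ := b
  dsimp only at hk hmin
  set H := halves p k (j - k).toNat
  have hkH : k + ((j - k).toNat : ℤ) = j := by omega
  have hfree : s.free.Perm (⟨j, p⟩ :: s.free.erase ⟨j, p⟩) := List.perm_cons_erase hb
  have hbricks : s.bricks.Perm (⟨j, p⟩ :: (s.free.erase ⟨j, p⟩ ++ s.homes)) :=
    hfree.append_right s.homes
  have hpieces : ∀ u ∈ (⟨k, p⟩ : Brick) :: H, u.toSet ⊆ (⟨j, p⟩ : Brick).toSet := by
    rintro u (_ | ⟨_, hu⟩)
    · exact toSet_mono_cls p hk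
    · have := subset_of_mem_halves hu
      rwa [hkH] at this
  have hbj : (⟨j, p⟩ : Brick).toSet ⊆ (container s.level).toSet :=
    hs.subset_container _ (List.mem_append_left _ hb)
  have hperm : (s.fill ⟨j, p⟩ k).bricks.Perm
      ((s.free.erase ⟨j, p⟩ ++ s.homes) ++ ((⟨k, p⟩ : Brick) :: H)) := by
    have key : ∀ (R H M : List Brick) (h : Brick),
        ((R ++ H) ++ (M ++ [h])).Perm ((R ++ M) ++ (h :: H)) := fun R H M h =>
      List.perm_iff_count.2 fun a => by simp [List.count_cons]; omega
    exact key _ _ _ _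
  refine ⟨?_, ?_, ?_, ?_, ?_⟩
  · refine (hperm.pairwise_iff fun h => h.symm).2 (pairwise_append_of_subset
      ((hbricks.pairwise_iff fun h => h.symm).1 hs.pairwise) ?_ hpieces)
    exact List.Pairwise.cons (fun u hu => interiorDisjoint_of_mem_halves hu)
      pairwise_interiorDisjoint_halves
  · intro u hu
    rcases List.mem_append.1 (hperm.mem_iff.1 hu) with hu | hu
    · exact hs.subset_container u (hbricks.mem_iff.2 (List.mem_cons_of_mem _ hu))
    · exact (hpieces u hu).trans hbj
  · intro u hu
    rcases List.mem_append.1 hu with hu | hu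
    · exact hs.free_cls_lt u (List.mem_of_mem_erase hu)
    · have := (cls_of_mem_halves hu).2
      have := hs.free_cls_lt _ hb
      dsimp only [State.fill] at *
      omega
  · refine List.map_append ▸ List.nodup_append.2 ⟨hs.nodup_free_cls.sublist
      (List.erase_sublist.map _), nodup_map_cls_halves, fun i hi i' hi' => ?_⟩
    obtain ⟨u, hu, rfl⟩ := List.mem_map.1 hi
    obtain ⟨v, hv, rfl⟩ := List.mem_map.1 hi'
    have hv := cls_of_mem_halves hv
    have := hmin u (List.mem_of_mem_erase hu)
    dsimp only at hv
    omega
  · have hj := weight_halves (p := p) (a := k) (n := (j - k).toNat)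
    rw [hkH] at hj
    simp only [State.fill, weight_append, weight_cons, weight_nil, hs.weight_eq,
      weight_eq_of_perm hfree]
    linarith

def pick (k : ℤ) (l : List Brick) : Option Brick :=
  (l.filter fun b => k ≤ b.cls).argmin Brick.cls

lemma pick_spec {l : List Brick} (h : pick k l = some b) :
    b ∈ l ∧ k ≤ b.cls ∧ ∀ u ∈ l, k ≤ u.cls → b.cls ≤ u.cls := by
  have hb := List.mem_filter.1 (List.argmin_mem h)
  exact ⟨hb.1, by simpa using hb.2, fun u hu hku =>
    List.le_of_mem_argmin (List.mem_filter.2 ⟨hu, by simpa using hku⟩) h⟩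

lemma cls_lt_of_pick_eq_none {l : List Brick} (h : pick k l = none) : ∀ u ∈ l, u.cls < k := by
  intro u hu
  by_contra hku
  have : u ∈ l.filter fun b => k ≤ b.cls := List.mem_filter.2 ⟨hu, by simpa using hku⟩
  rw [pick, List.argmin_eq_none] at h
  simp [h] at this

def step (s : State) (k : ℤ) : State :=
  if s.homes = [] then ⟨k, [], [container k]⟩
  else match pick k s.free with
    | some b => s.fill b k
    | none => (s.grow (max s.level k + 1)).fill (container (max s.level k + 1)).secondHalf k

lemma secondHalf_container_mem_grow (hc : s.level ≤ c) :
    (container (c + 1)).secondHalf ∈ (s.grow (c + 1)).free := by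
  have hn : (c + 1 - s.level).toNat = (c - s.level).toNat + 1 := by omega
  have hcls : s.level + ((c - s.level).toNat : ℤ) + 1 = c + 1 := by omega
  rw [State.grow, hn, halves, hcls]
  exact List.mem_append_right _ List.mem_cons_self

structure Invariant (s : State) : Prop extends s.Layout where
  homes_ne_nil : s.homes ≠ []
  weight_le : (2 : ℝ) ^ s.level ≤ 2 * weight s.homes

lemma invariant_step_of_homes_eq_nil (h : s.homes = []) : (s.step k).Invariant := by
  simp only [step, h, if_true]
  refine ⟨⟨?_, ?_, ?_, ?_, ?_⟩, ?_, ?_⟩ <;> simp [bricks, container]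
  linarith [zpow_pos (by norm_num : (0 : ℝ) < 2) k]

/-- The free bricks have distinct classes below `k`, so together they weigh less than `2 ^ k`. -/
lemma two_zpow_max_le (hs : s.Layout) (h : pick k s.free = none) :
    (2 : ℝ) ^ max s.level k ≤ weight s.homes + 2 ^ k := by
  rcases max_choice s.level k with hmax | hmax <;> rw [hmax]
  · have := weight_lt_of_nodup hs.nodup_free_cls (cls_lt_of_pick_eq_none h)
    linarith [hs.weight_eq]
  · linarith [weight_nonneg s.homes]

lemma Invariant.step (hs : s.Invariant) : (s.step k).Invariant := by
  rw [State.step, if_neg hs.homes_ne_nil]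
  rcases hpick : pick k s.free with _ | b
  · have hK : s.level ≤ max s.level k := le_max_left _ _
    refine ⟨(hs.grow (by omega)).fill (secondHalf_container_mem_grow hK) ?_ ?_,
      by simp [State.fill], ?_⟩
    · simp [container]
    · intro u hu hku
      simp only [secondHalf_cls, container, add_sub_cancel_right]
      rcases List.mem_append.1 hu with hu | hu
      · exact absurd (cls_lt_of_pick_eq_none hpick u hu) (not_lt.2 hku)
      · have := cls_of_mem_halves hu
        omega
    · have := two_zpow_max_le hs.toLayout hpick
      simp only [State.fill, State.grow, weight_append, weight_cons, weight_nil]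
      rw [zpow_add_one₀ (by norm_num : (2 : ℝ) ≠ 0)]
      linarith
  · obtain ⟨hb, hkb, hmin⟩ := pick_spec hpick
    refine ⟨hs.fill hb hkb hmin, by simp [State.fill], ?_⟩
    simp only [State.fill, weight_append, weight_cons, weight_nil]
    linarith [hs.weight_le, zpow_pos (by norm_num : (0 : ℝ) < 2) k]

lemma Invariant.pairwise_homes (hs : s.Invariant) :
    s.homes.Pairwise InteriorDisjoint :=
  hs.pairwise.sublist (List.sublist_append_right _ _)

lemma homes_step (s : State) (k : ℤ) : ∃ p, (s.step k).homes = s.homes ++ [⟨k, p⟩] := by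
  unfold State.step
  split_ifs with h
  · exact ⟨0, by simp [h, container]⟩
  · split <;> exact ⟨_, rfl⟩

end State

open State

def run (ks : List ℤ) : State := ks.foldl State.step ⟨0, [], []⟩

lemma run_append_singleton (ks : List ℤ) (k : ℤ) : run (ks ++ [k]) = (run ks).step k :=
  List.foldl_append

lemma invariant_run {ks : List ℤ} (h : ks ≠ []) : (run ks).Invariant := by
  induction ks using List.reverseRecOn with
  | nil => exact absurd rfl h
  | append_singleton ks k ih =>
    rw [run_append_singleton]
    by_cases hks : ks = []
    · exact invariant_step_of_homes_eq_nil (by simp [hks, run])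
    · exact (ih hks).step

lemma map_cls_homes_run (ks : List ℤ) : (run ks).homes.map Brick.cls = ks := by
  induction ks using List.reverseRecOn with
  | nil => rfl
  | append_singleton ks k ih =>
    obtain ⟨p, hp⟩ := homes_step (run ks) k
    rw [run_append_singleton, hp, List.map_append, ih]
    rfl

lemma length_homes_run (ks : List ℤ) : (run ks).homes.length = ks.length := by
  simpa using congrArg List.length (map_cls_homes_run ks)

lemma homes_run_prefix (ks ks' : List ℤ) : (run ks).homes <+: (run (ks ++ ks')).homes := by
  induction ks' using List.reverseRecOn with
  | nil => simp
  | append_singleton ks' k ih =>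
    obtain ⟨p, hp⟩ := homes_step (run (ks ++ ks')) k
    rw [← List.append_assoc, run_append_singleton, hp]
    exact ih.trans (List.prefix_append _ _)

lemma homes_run_take (ks : List ℤ) (j : ℕ) :
    (run (ks.take j)).homes = (run ks).homes.take j := by
  have h := List.prefix_iff_eq_take.1 (homes_run_prefix (ks.take j) (ks.drop j))
  rw [List.take_append_drop, length_homes_run, List.length_take] at h
  rw [h, ← length_homes_run, ← List.take_eq_take_min]

def pack (l : List ℝ) : State := run (l.map sizeClass)

def strategy (l : List ℝ) : ℝ × ℝ := ((pack l).homes.getLast?.map Brick.corner).getD 0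

lemma length_homes_pack (l : List ℝ) : (pack l).homes.length = l.length := by
  simp [pack, length_homes_run]

lemma cls_homes_pack (l : List ℝ) {i : ℕ} (hi : i < (pack l).homes.length) :
    (pack l).homes[i].cls = sizeClass (l[i]'(length_homes_pack l ▸ hi)) := by
  have h := List.getElem_of_eq (map_cls_homes_run (l.map sizeClass)) (by simpa [pack] using hi)
  simpa [pack] using h

lemma strategy_take (l : List ℝ) {i : ℕ} (hi : i < (pack l).homes.length) :
    strategy (l.take (i + 1)) = (pack l).homes[i].corner := by
  unfold pack at hi ⊢
  rw [strategy, pack, List.map_take, homes_run_take, List.getLast?_take,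
    if_neg (Nat.succ_ne_zero i), Nat.add_sub_cancel, List.getElem?_eq_getElem hi]
  rfl

lemma place_strategy_subset {n : ℕ} {x : Fin n → ℝ} (hx : ∀ i, 0 < x i) (i : Fin n) :
    place strategy x i ⊆ ((pack (List.ofFn x)).homes[(i : ℕ)]'(by
      simp [length_homes_pack])).toSet := by
  rw [place, strategy_take]
  refine placedSquare_subset _ ((le_scale_sizeClass (hx i)).trans_eq ?_)
  rw [cls_homes_pack]
  simp

lemma _root_.List.Pairwise.rel_getElem_of_ne {α : Type*} {R : α → α → Prop}
    (hR : ∀ {a b}, R a b → R b a) {l : List α} (hl : l.Pairwise R) {i j : ℕ}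
    (hi : i < l.length) (hj : j < l.length) (hij : i ≠ j) : R l[i] l[j] := by
  rcases lt_or_gt_of_ne hij with h | h
  · exact List.pairwise_iff_getElem.1 hl i j hi hj h
  · exact hR (List.pairwise_iff_getElem.1 hl j i hj hi h)

theorem strategy_valid : ValidStrategy strategy := by
  intro n x hx i j hij
  have hinv : (pack (List.ofFn x)).Invariant := invariant_run (by
    simpa [List.ofFn_eq_nil_iff] using Nat.pos_iff_ne_zero.1 (i.pos))
  exact Disjoint.mono (interior_mono (place_strategy_subset hx i))
    (interior_mono (place_strategy_subset hx j))
    (hinv.pairwise_homes.rel_getElem_of_ne (fun h => h.symm) _ _ (Fin.val_ne_of_ne hij))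

lemma weight_homes_pack_le {l : List ℝ} (hl : ∀ x ∈ l, 0 < x) :
    weight (pack l).homes ≤ 2 * (l.map (· ^ 2)).sum := by
  have h : weight (pack l).homes = (l.map fun x => (2 : ℝ) ^ sizeClass x).sum := by
    have := congrArg (fun ks => (ks.map fun k : ℤ => (2 : ℝ) ^ k).sum)
      (map_cls_homes_run (l.map sizeClass))
    simpa [weight, pack, List.map_map, Function.comp_def] using this
  rw [h, ← List.sum_map_mul_left]
  exact List.sum_le_sum fun x hx => two_zpow_sizeClass_le (hl x hx)

lemma scale_level_sq_le {l : List ℝ} (hl : ∀ x ∈ l, 0 < x) (hne : l ≠ []) :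
    scale ((pack l).level + 1) ^ 2 ≤ 8 * (l.map (· ^ 2)).sum := by
  have hinv : (pack l).Invariant := invariant_run (by simpa [pack] using hne)
  rw [scale_sq, zpow_add_one₀ (by norm_num : (2 : ℝ) ≠ 0)]
  linarith [hinv.weight_le, weight_homes_pack_le hl]

lemma iUnion_place_strategy_subset {m : ℕ} {y : Fin m → ℝ} (hy : ∀ i, 0 < y i) (hm : m ≠ 0) :
    ⋃ i, place strategy y i ⊆ placedSquare 0 (scale ((pack (List.ofFn y)).level + 1)) := by
  have hinv : (pack (List.ofFn y)).Invariant := invariant_run (by simpa [pack] using hm)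
  refine iUnion_subset fun i => (place_strategy_subset hy i).trans
    ((hinv.subset_container _ (List.mem_append_right _ (List.getElem_mem _))).trans ?_)
  exact container_subset _

open MeasureTheory in
lemma volume_interior_placedSquare (p : ℝ × ℝ) {x : ℝ} (hx : 0 ≤ x) :
    volume (interior (placedSquare p x)) = ENNReal.ofReal (x ^ 2) := by
  rw [placedSquare, interior_prod_eq, interior_Icc, interior_Icc, Measure.volume_eq_prod,
    Measure.prod_prod, Real.volume_Ioo, Real.volume_Ioo, add_sub_cancel_left,
    add_sub_cancel_left, ← ENNReal.ofReal_mul hx, sq]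

open MeasureTheory in
lemma sum_sq_le_sq_of_packing {m : ℕ} {y : Fin m → ℝ} (hy : ∀ i, 0 ≤ y i) {s : ℝ} (hs : 0 ≤ s)
    {p : Fin m → ℝ × ℝ} (hsub : ∀ i, placedSquare (p i) (y i) ⊆ Icc 0 s ×ˢ Icc 0 s)
    (hdisj : ∀ i j, i ≠ j →
      Disjoint (interior (placedSquare (p i) (y i))) (interior (placedSquare (p j) (y j)))) :
    ∑ i, y i ^ 2 ≤ s ^ 2 := by
  have hvol := calc
    ENNReal.ofReal (∑ i, y i ^ 2) = ∑ i, volume (interior (placedSquare (p i) (y i))) := by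
      rw [ENNReal.ofReal_sum_of_nonneg fun i _ => sq_nonneg (y i)]
      exact Finset.sum_congr rfl fun i _ => (volume_interior_placedSquare _ (hy i)).symm
    _ = volume (⋃ i, interior (placedSquare (p i) (y i))) := by
      rw [measure_iUnion (fun i j hij => hdisj i j hij) fun _ => isOpen_interior.measurableSet,
        tsum_fintype]
    _ ≤ volume (interior (placedSquare 0 s)) := by
      refine measure_mono (iUnion_subset fun i => interior_mono ?_)
      simpa [placedSquare] using hsub i
    _ = ENNReal.ofReal (s ^ 2) := volume_interior_placedSquare 0 hs
  exact (ENNReal.ofReal_le_ofReal_iff (sq_nonneg s)).1 hvol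

lemma sqrt_sum_sq_le_Opt {m : ℕ} {y : Fin m → ℝ} (hy : ∀ i, 0 ≤ y i) {s : ℝ} (hs : 0 < s)
    {p : Fin m → ℝ × ℝ} (hsub : ∀ i, placedSquare (p i) (y i) ⊆ Icc 0 s ×ˢ Icc 0 s)
    (hdisj : ∀ i j, i ≠ j →
      Disjoint (interior (placedSquare (p i) (y i))) (interior (placedSquare (p j) (y j)))) :
    √(∑ i, y i ^ 2) ≤ Opt y :=
  le_csInf ⟨s, hs, p, hsub, hdisj⟩ fun _ ⟨ht, _, hqsub, hqdisj⟩ =>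
    (Real.sqrt_le_sqrt (sum_sq_le_sq_of_packing hy ht.le hqsub hqdisj)).trans_eq
      (Real.sqrt_sq ht.le)

/-- The strategy itself witnesses that the set defining `Opt` is nonempty (else `Opt = 0`). -/
lemma scale_level_le_Opt {m : ℕ} {y : Fin m → ℝ} (hy : ∀ i, 0 < y i) (hm : m ≠ 0) :
    scale ((pack (List.ofFn y)).level + 1) ≤ 2 * √2 * Opt y := by
  set E := scale ((pack (List.ofFn y)).level + 1)
  have hsum : 0 ≤ ∑ i, y i ^ 2 := by positivity
  have h8 : E ^ 2 ≤ 8 * ∑ i, y i ^ 2 := by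
    simpa [List.sum_ofFn] using scale_level_sq_le (l := List.ofFn y)
      (by simpa [List.mem_ofFn] using hy) (by simpa using hm)
  have hE : E ^ 2 ≤ (2 * √2 * √(∑ i, y i ^ 2)) ^ 2 := by
    rw [mul_pow, mul_pow, Real.sq_sqrt zero_le_two, Real.sq_sqrt hsum]
    linarith
  have hOpt : √(∑ i, y i ^ 2) ≤ Opt y := by
    refine sqrt_sum_sq_le_Opt (fun i => (hy i).le) (scale_pos ((pack (List.ofFn y)).level + 1))
      (p := fun i => strategy ((List.ofFn y).take (i + 1))) (fun i => ?_) (strategy_valid m y hy)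
    have := (subset_iUnion (place strategy y) i).trans (iUnion_place_strategy_subset hy hm)
    rwa [placedSquare, Prod.fst_zero, Prod.snd_zero, zero_add] at this
  calc E ≤ 2 * √2 * √(∑ i, y i ^ 2) :=
        (pow_le_pow_iff_left₀ (scale_pos _).le (by positivity) two_ne_zero).1 hE
    _ ≤ 2 * √2 * Opt y := by gcongr

lemma minSide_le {S : Set (ℝ × ℝ)} (hS : S.Nonempty) {p : ℝ × ℝ} {s : ℝ}
    (h : S ⊆ placedSquare p s) : minSide S ≤ s := by
  refine csInf_le ⟨0, fun t ⟨a, b, ht⟩ => ?_⟩ ⟨p.1, p.2, h⟩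
  obtain ⟨q, hq⟩ := hS
  have := (ht hq).1
  linarith [this.1, this.2]

lemma place_castLE (σ : List ℝ → ℝ × ℝ) {n m : ℕ} (x : Fin n → ℝ) (hmn : m ≤ n) (i : Fin m) :
    place σ (fun j => x (Fin.castLE hmn j)) i = place σ x (Fin.castLE hmn i) := by
  have h : List.ofFn (fun j => x (Fin.castLE hmn j)) = (List.ofFn x).take m :=
    Fin.ofFn_take_eq_take_ofFn hmn x
  simp only [place, h, List.take_take, min_eq_left (Nat.succ_le_of_lt i.isLt), Fin.val_castLE]

lemma iUnion_place_lt_eq (σ : List ℝ → ℝ × ℝ) {n m : ℕ} (x : Fin n → ℝ) (hmn : m ≤ n) :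
    ⋃ i : Fin n, ⋃ (_ : (i : ℕ) < m), place σ x i =
      ⋃ i : Fin m, place σ (fun j => x (Fin.castLE hmn j)) i := by
  ext q
  simp only [mem_iUnion, place_castLE]
  constructor
  · rintro ⟨i, hi, hq⟩
    exact ⟨⟨i, hi⟩, hq⟩
  · rintro ⟨i, hq⟩
    exact ⟨Fin.castLE hmn i, i.isLt, hq⟩

lemma place_nonempty (σ : List ℝ → ℝ × ℝ) {n : ℕ} {x : Fin n → ℝ} {i : Fin n} (hx : 0 ≤ x i) :
    (place σ x i).Nonempty :=
  ⟨_, ⟨le_rfl, le_add_of_nonneg_right hx⟩, ⟨le_rfl, le_add_of_nonneg_right hx⟩⟩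

end DynamicBrickPacking

end

open DynamicBrickPacking

/-- Dynamic Brick Packing is `2√2`-competitive: there is a valid online placement
strategy such that, at every stage `m` of every input sequence, the side length of
the smallest axis-parallel square enclosing the first `m` placed squares is at most
`2√2` times the optimal offline container size for the first `m` side lengths. -/
theorem dynamic_brick_competitive :
    ∃ σ : List ℝ → ℝ × ℝ, ValidStrategy σ ∧
      ∀ (n : ℕ) (x : Fin n → ℝ), (∀ i, 0 < x i) →
        ∀ (m : ℕ) (hm : 1 ≤ m) (hmn : m ≤ n),
          minSide (⋃ i : Fin n, ⋃ (_ : (i : ℕ) < m), place σ x i) ≤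
            2 * Real.sqrt 2 * Opt (fun i : Fin m => x (Fin.castLE hmn i)) := by
  refine ⟨strategy, strategy_valid, fun n x hx m hm hmn => ?_⟩
  rw [iUnion_place_lt_eq strategy x hmn]
  set y : Fin m → ℝ := fun i => x (Fin.castLE hmn i)
  have hy : ∀ i, 0 < y i := fun i => hx _
  have hne := (place_nonempty strategy (hy ⟨0, hm⟩).le).mono (subset_iUnion _ _)
  exact (minSide_le hne (iUnion_place_strategy_subset hy (by omega))).trans
    (scale_level_le_Opt hy (by omega))
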